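/- arXiv:2208.13531 — 2 statements merged into one kernel-verified Lean document; each statement's English description precedes it below -/
import Mathlib

section
/- Let n = p+q with p ≥ q ≥ 1, let X be an n×n Hermitian matrix with eigenvalues λ_1 ≥ ... ≥ λ_n, and let s_1 ≥ ... ≥ s_q ≥ 0 be the singular values of the upper-right p×q block π(X) of X. Then λ_1 − λ_n ≥ 2 s_1. -/
open Matrix
open scoped ComplexOrder

noncomputable section

/-- `lam` is the weakly decreasing list of eigenvalues of the Hermitian matrix `X`. -/
def IsEigList {n : ℕ} {X : Matrix (Fin n) (Fin n) ℂ} (hX : X.IsHermitian)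
    (lam : Fin n → ℝ) : Prop :=
  Antitone lam ∧ ∃ e : Fin n ≃ Fin n, ∀ i, lam i = hX.eigenvalues (e i)

/-- `s` is the weakly decreasing list of singular values of `Y`. -/
def IsSingList {p q : ℕ} (Y : Matrix (Fin p) (Fin q) ℂ) (s : Fin q → ℝ) : Prop :=
  Antitone s ∧ (∀ k, 0 ≤ s k) ∧
    ∃ e : Fin q ≃ Fin q, ∀ k,
      s k ^ 2 = (Matrix.posSemidef_conjTranspose_mul_self Y).1.eigenvalues (e k)

/-- The upper-right `p × q` block of an `(p+q) × (p+q)` matrix. -/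
def offBlock {p q : ℕ} (X : Matrix (Fin (p + q)) (Fin (p + q)) ℂ) :
    Matrix (Fin p) (Fin q) ℂ :=
  fun i j => X (Fin.castAdd q i) (Fin.natAdd p j)

/-- The matrix `[[0, Y],[Yᴴ, 0]]`. -/
def blockZ {p q : ℕ} (Y : Matrix (Fin p) (Fin q) ℂ) :
    Matrix (Fin (p + q)) (Fin (p + q)) ℂ :=
  Matrix.reindex finSumFinEquiv finSumFinEquiv (Matrix.fromBlocks 0 Y Yᴴ 0)

/-- `ν(s) = (s₁,…,s_q,0,…,0,−s_q,…,−s₁) ∈ ℝⁿ`, `n = p + q`. -/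
def nuList (p q : ℕ) (s : Fin q → ℝ) : Fin (p + q) → ℝ :=
  fun k =>
    if h : (k : ℕ) < q then s ⟨k, h⟩
    else if h' : p ≤ (k : ℕ) then
      -s ⟨p + q - 1 - (k : ℕ), by have := k.isLt; omega⟩
    else 0

/-- The matrix `I_{p,q} = Diag(I_p, −I_q)`. -/
def Ipq (p q : ℕ) : Matrix (Fin (p + q)) (Fin (p + q)) ℂ :=
  Matrix.diagonal fun k => if (k : ℕ) < p then 1 else -1

/-- The `U(n)`-conjugation orbit of a matrix. -/
def uOrbit {n : ℕ} (X : Matrix (Fin n) (Fin n) ℂ) : Set (Matrix (Fin n) (Fin n) ℂ) :=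
  { Y | ∃ g ∈ Matrix.unitaryGroup (Fin n) ℂ, Y = g * X * star g }

/-- Membership in the Horn cone `Horn(n)`. -/
def HornMem {n : ℕ} (x y z : Fin n → ℝ) : Prop :=
  ∃ (A B : Matrix (Fin n) (Fin n) ℂ) (hA : A.IsHermitian) (hB : B.IsHermitian)
    (hC : (A + B).IsHermitian), IsEigList hA x ∧ IsEigList hB y ∧ IsEigList hC z

/-! Let `Y = π(X)` and take unit vectors `u`, `v` with `Y v = s₁ u` (a top singular pair). The
vectors `x = (u, 0)` and `y = (0, v)` are orthonormal with `⟪x, X y⟫ = s₁`, so `x ± y` has squared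
norm `2` and `⟪x + y, X (x + y)⟫ - ⟪x - y, X (x - y)⟫ = 4 s₁`. Both quadratic forms lie in
`[2 λₙ, 2 λ₁]`, whence `4 s₁ ≤ 2 (λ₁ - λₙ)`. -/

open scoped MatrixOrder

theorem Fin.append_dotProduct_append {R : Type*} [NonUnitalNonAssocSemiring R] {p q : ℕ}
    (a c : Fin p → R) (b d : Fin q → R) :
    Fin.append a b ⬝ᵥ Fin.append c d = a ⬝ᵥ c + b ⬝ᵥ d := by
  simp [dotProduct, Fin.sum_univ_add]

theorem Fin.star_append {R : Type*} [Star R] {p q : ℕ} (a : Fin p → R) (b : Fin q → R) :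
    star (Fin.append a b) = Fin.append (star a) (star b) := by
  ext i
  refine Fin.addCases (fun i => ?_) (fun j => ?_) i <;> simp

namespace Matrix

variable {n : Type*} [Fintype n]

theorem IsHermitian.star_dotProduct_mulVec_comm {A : Matrix n n ℂ} (hA : A.IsHermitian)
    (x y : n → ℂ) : star y ⬝ᵥ A *ᵥ x = star (star x ⬝ᵥ A *ᵥ y) := by
  rw [star_dotProduct, star_mulVec, ← dotProduct_mulVec, hA.eq]

variable [DecidableEq n]

theorem re_dotProduct_mulVec_le_of_le_algebraMap {A : Matrix n n ℂ} {c : ℝ}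
    (hA : A ≤ algebraMap ℝ _ c) (x : n → ℂ) :
    (star x ⬝ᵥ A *ᵥ x).re ≤ c * (star x ⬝ᵥ x).re := by
  have h := (Complex.nonneg_iff.mp ((le_iff.mp hA).dotProduct_mulVec_nonneg x)).1
  simpa [sub_mulVec, Algebra.algebraMap_eq_smul_one, smul_mulVec] using h

theorem le_re_dotProduct_mulVec_of_algebraMap_le {A : Matrix n n ℂ} {c : ℝ}
    (hA : algebraMap ℝ _ c ≤ A) (x : n → ℂ) :
    c * (star x ⬝ᵥ x).re ≤ (star x ⬝ᵥ A *ᵥ x).re := by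
  have h := (Complex.nonneg_iff.mp ((le_iff.mp hA).dotProduct_mulVec_nonneg x)).1
  simpa [sub_mulVec, Algebra.algebraMap_eq_smul_one, smul_mulVec] using h

theorem IsHermitian.two_mul_re_dotProduct_mulVec_le {A : Matrix n n ℂ} (hA : A.IsHermitian)
    {lo hi : ℝ} (hlo : algebraMap ℝ _ lo ≤ A) (hhi : A ≤ algebraMap ℝ _ hi) {x y : n → ℂ}
    (hx : star x ⬝ᵥ x = 1) (hy : star y ⬝ᵥ y = 1) (hxy : star x ⬝ᵥ y = 0) :
    2 * (star x ⬝ᵥ A *ᵥ y).re ≤ hi - lo := by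
  have hyx : star y ⬝ᵥ x = 0 := by rw [star_dotProduct, hxy, star_zero]
  have hplus := re_dotProduct_mulVec_le_of_le_algebraMap hhi (x + y)
  have hminus := le_re_dotProduct_mulVec_of_algebraMap_le hlo (x - y)
  simp only [star_add, star_sub, add_dotProduct, dotProduct_add, sub_dotProduct, dotProduct_sub,
    mulVec_add, mulVec_sub, hx, hy, hxy, hyx, hA.star_dotProduct_mulVec_comm x y, Complex.add_re,
    Complex.sub_re, Complex.star_def, Complex.conj_re] at hplus hminus
  norm_num at hplus hminus
  linarith

theorem exists_dotProduct_mulVec_eq_of_sq_eq_eigenvalue {m : Type*} [Fintype m]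
    (Y : Matrix m n ℂ) {σ : ℝ} (hσ : 0 < σ) {i : n}
    (hi : σ ^ 2 = (posSemidef_conjTranspose_mul_self Y).1.eigenvalues i) :
    ∃ u v, star u ⬝ᵥ u = 1 ∧ star v ⬝ᵥ v = 1 ∧ star u ⬝ᵥ Y *ᵥ v = σ := by
  set hB := (posSemidef_conjTranspose_mul_self Y).1
  set v : n → ℂ := ⇑(hB.eigenvectorBasis i)
  have hv : star v ⬝ᵥ v = 1 := by
    rw [dotProduct_comm, ← EuclideanSpace.inner_eq_star_dotProduct, inner_self_eq_norm_sq_to_K,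
      hB.eigenvectorBasis.orthonormal.1 i]
    norm_num
  have hYv : star (Y *ᵥ v) ⬝ᵥ Y *ᵥ v = (σ : ℂ) ^ 2 := by
    rw [star_mulVec, ← dotProduct_mulVec, mulVec_mulVec, hB.mulVec_eigenvectorBasis, ← hi,
      dotProduct_smul, hv]
    simp
  have hσ' : (σ : ℂ) ≠ 0 := by exact_mod_cast hσ.ne'
  have hstar : star (σ : ℂ)⁻¹ = (σ : ℂ)⁻¹ := by rw [star_inv₀, Complex.star_def, Complex.conj_ofReal]
  refine ⟨(σ : ℂ)⁻¹ • Y *ᵥ v, v, ?_, hv, ?_⟩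
  · rw [star_smul, smul_dotProduct, dotProduct_smul, hYv, hstar, smul_eq_mul, smul_eq_mul]
    field_simp
  · rw [star_smul, smul_dotProduct, hYv, hstar, smul_eq_mul]
    field_simp

end Matrix

theorem star_append_zero_dotProduct_mulVec_zero_append {p q : ℕ}
    (X : Matrix (Fin (p + q)) (Fin (p + q)) ℂ) (u : Fin p → ℂ) (v : Fin q → ℂ) :
    star (Fin.append u 0) ⬝ᵥ X *ᵥ Fin.append 0 v = star u ⬝ᵥ offBlock X *ᵥ v := by
  simp [dotProduct, mulVec, Fin.sum_univ_add, offBlock]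

theorem IsEigList.spectrum_eq_range {n : ℕ} {X : Matrix (Fin n) (Fin n) ℂ} {hX : X.IsHermitian}
    {lam : Fin n → ℝ} (hlam : IsEigList hX lam) : spectrum ℝ X = Set.range lam := by
  obtain ⟨-, e, he⟩ := hlam
  rw [hX.spectrum_real_eq_range_eigenvalues, funext he]
  exact (EquivLike.range_comp _ e).symm

/-- `λ₁ − λ_n ≥ 2 s₁`. -/
theorem lambda_one_sub_lambda_n (p q : ℕ) (hq : 1 ≤ q)
    (X : Matrix (Fin (p + q)) (Fin (p + q)) ℂ) (hX : X.IsHermitian)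
    (lam : Fin (p + q) → ℝ) (hlam : IsEigList hX lam)
    (s : Fin q → ℝ) (hs : IsSingList (offBlock X) s) :
    lam ⟨0, by omega⟩ - lam ⟨p + q - 1, by omega⟩ ≥ 2 * s ⟨0, by omega⟩ := by
  have hspec := hlam.spectrum_eq_range
  obtain ⟨hanti, -⟩ := hlam
  obtain ⟨-, hs_nonneg, _, hs_sq⟩ := hs
  have hlo : algebraMap ℝ _ (lam ⟨p + q - 1, by omega⟩) ≤ X :=
    algebraMap_le_of_le_spectrum (by
      rw [hspec]; rintro _ ⟨k, rfl⟩; exact hanti (Fin.le_def.mpr (Nat.le_sub_one_of_lt k.isLt)))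
      hX.isSelfAdjoint
  have hhi : X ≤ algebraMap ℝ _ (lam ⟨0, by omega⟩) :=
    le_algebraMap_of_spectrum_le (by
      rw [hspec]; rintro _ ⟨k, rfl⟩; exact hanti (Fin.le_def.mpr (Nat.zero_le _))) hX.isSelfAdjoint
  rcases (hs_nonneg ⟨0, hq⟩).eq_or_lt with h0 | h0
  · linarith [hanti (Fin.le_def.mpr (Nat.zero_le _) :
      (⟨0, by omega⟩ : Fin (p + q)) ≤ ⟨p + q - 1, by omega⟩)]
  obtain ⟨u, v, hu, hv, huv⟩ :=
    (offBlock X).exists_dotProduct_mulVec_eq_of_sq_eq_eigenvalue h0 (hs_sq _)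
  have key := hX.two_mul_re_dotProduct_mulVec_le hlo hhi (x := Fin.append u 0)
    (y := Fin.append 0 v) (by simp [Fin.star_append, Fin.append_dotProduct_append, hu])
    (by simp [Fin.star_append, Fin.append_dotProduct_append, hv])
    (by simp [Fin.star_append, Fin.append_dotProduct_append])
  rw [star_append_zero_dotProduct_mulVec_zero_append, huv, Complex.ofReal_re] at key
  linarith
end
end

section
/- Let X be a 6×6 Hermitian matrix with eigenvalues λ_1 ≥ ... ≥ λ_6, and let s_1 ≥ s_2 ≥ s_3 ≥ 0 be the singular values of the upper-right 3×3 block of X. Then λ_1 + λ_2 + λ_3 − λ_4 − λ_5 − λ_6 ≥ 2(s_1 + s_2 + s_3). -/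
open Matrix
open scoped ComplexOrder

noncomputable section

/-!
Let `Y = π(X)` have singular pairs `Y vₖ = sₖ uₖ` and put `w±ₖ = (uₖ, ±vₖ)/√2`. Both families
`w⁺` and `w⁻` are orthonormal and `⟪w⁺ₖ, X w⁺ₖ⟫ - ⟪w⁻ₖ, X w⁻ₖ⟫ = 2 sₖ`. Expanding in an
eigenbasis `(fᵢ)` of `X` gives `2 ∑ sₖ = ∑ λᵢ xᵢ` with `xᵢ = ∑ₖ |⟪fᵢ, w⁺ₖ⟫|² - ∑ₖ |⟪fᵢ, w⁻ₖ⟫|²`.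
By Bessel and Parseval `|xᵢ| ≤ 1` and `∑ xᵢ = 0`, and on this polytope the linear form
`∑ λᵢ xᵢ` is maximised at `x = (1, 1, 1, -1, -1, -1)`.
-/

open Finset RCLike WithLp
open scoped InnerProductSpace

theorem sum_mul_le_sum_sub_sum_compl {ι : Type*} [Fintype ι] [DecidableEq ι] {lam x : ι → ℝ}
    {S : Finset ι} {c : ℝ} (hS : ∀ i ∈ S, c ≤ lam i) (hSc : ∀ i ∉ S, lam i ≤ c)
    (hx : ∀ i, |x i| ≤ 1) (hsum : ∑ i, x i = 0) (hcard : 2 * #S = Fintype.card ι) :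
    ∑ i, lam i * x i ≤ ∑ i ∈ S, lam i - ∑ i ∈ Sᶜ, lam i := by
  set σ : ι → ℝ := fun i => if i ∈ S then 1 else -1
  have hσS : ∀ i ∈ S, σ i = 1 := fun i hi => if_pos hi
  have hσSc : ∀ i ∈ Sᶜ, σ i = -1 := fun i hi => if_neg (mem_compl.1 hi)
  have hσ : ∑ i, lam i * σ i = ∑ i ∈ S, lam i - ∑ i ∈ Sᶜ, lam i := by
    rw [← sum_add_sum_compl S, sub_eq_add_neg, ← sum_neg_distrib]
    congr 1 <;> refine sum_congr rfl fun i hi => ?_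
    · rw [hσS i hi, mul_one]
    · rw [hσSc i hi, mul_neg_one]
  have hσsum : ∑ i, σ i = 0 := by
    have hcard' : (2 * #S : ℝ) = Fintype.card ι := by exact_mod_cast hcard
    rw [← sum_add_sum_compl S, sum_congr rfl hσS, sum_congr rfl hσSc]
    simp only [sum_const, card_compl, nsmul_eq_mul, mul_one, mul_neg,
      Nat.cast_sub (card_le_univ S)]
    linarith
  -- `c` separates the large from the small `lam i`: both factors below have the same sign.
  have hterm : ∀ i, 0 ≤ (lam i - c) * (σ i - x i) := by
    intro i
    have := abs_le.1 (hx i)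
    by_cases hi : i ∈ S
    · rw [hσS i hi]
      exact mul_nonneg (by linarith [hS i hi]) (by linarith)
    · rw [hσSc i (mem_compl.2 hi)]
      exact mul_nonneg_of_nonpos_of_nonpos (by linarith [hSc i hi]) (by linarith)
  have hdiff : ∑ i, lam i * σ i - ∑ i, lam i * x i = ∑ i, (lam i - c) * (σ i - x i) := by
    simp only [sub_mul, mul_sub, sum_sub_distrib, ← mul_sum, hσsum, hsum]
    ring
  linarith [sum_nonneg fun i (_ : i ∈ univ) => hterm i]

theorem sum_mul_le_top_three_sub_bottom_three {lam x : Fin 6 → ℝ} (hlam : Antitone lam)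
    (hx : ∀ i, |x i| ≤ 1) (hsum : ∑ i, x i = 0) :
    ∑ i, lam i * x i ≤ lam 0 + lam 1 + lam 2 - lam 3 - lam 4 - lam 5 := by
  have h := sum_mul_le_sum_sub_sum_compl (lam := lam) (S := {0, 1, 2}) (c := lam 2)
    (fun i hi => hlam (by fin_cases hi <;> decide))
    (fun i hi => hlam (by revert hi; fin_cases i <;> decide)) hx hsum rfl
  rw [show ({0, 1, 2} : Finset (Fin 6))ᶜ = {3, 4, 5} by decide] at h
  simpa [sub_sub, add_assoc] using h

theorem inv_sqrt_two_mul_self : (√2)⁻¹ * (√2)⁻¹ = (2⁻¹ : ℝ) := by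
  rw [← mul_inv, Real.mul_self_sqrt zero_le_two]

section InnerProductSpace

variable {𝕜 E F ι K : Type*} [RCLike 𝕜] [NormedAddCommGroup E] [InnerProductSpace 𝕜 E]
  [NormedAddCommGroup F] [InnerProductSpace 𝕜 F]

theorem LinearMap.IsSymmetric.re_inner_apply_self_eq_sum [Fintype ι] {T : E →ₗ[𝕜] E}
    (hT : T.IsSymmetric) (b : OrthonormalBasis ι 𝕜 E) {μ : ι → ℝ}
    (hb : ∀ i, T (b i) = (μ i : 𝕜) • b i) (w : E) :
    re ⟪w, T w⟫_𝕜 = ∑ i, μ i * ‖⟪b i, w⟫_𝕜‖ ^ 2 := by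
  rw [← b.sum_inner_mul_inner, map_sum]
  refine sum_congr rfl fun i _ => ?_
  rw [← hT, hb, inner_smul_left, conj_ofReal, ← inner_conj_symm, mul_left_comm, RCLike.conj_mul,
    ← ofReal_pow, ← ofReal_mul, ofReal_re]

theorem Orthonormal.sum_sq_norm_inner_le_one [Fintype ι] [Fintype K] {w : K → E}
    (hw : Orthonormal 𝕜 w) (b : OrthonormalBasis ι 𝕜 E) (i : ι) : ∑ k, ‖⟪b i, w k⟫_𝕜‖ ^ 2 ≤ 1 := by
  simpa [norm_inner_symm (b i)] using hw.sum_inner_products_le (b i) (s := univ)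

theorem Orthonormal.sum_sum_sq_norm_inner [Fintype ι] [Fintype K] {w : K → E}
    (hw : Orthonormal 𝕜 w) (b : OrthonormalBasis ι 𝕜 E) :
    ∑ i, ∑ k, ‖⟪b i, w k⟫_𝕜‖ ^ 2 = Fintype.card K := by
  rw [sum_comm]
  simp [b.sum_sq_norm_inner_right, hw.1]

theorem LinearMap.IsSymmetric.exists_sum_re_inner_sub_eq [Fintype ι] [Fintype K]
    {T : E →ₗ[𝕜] E} (hT : T.IsSymmetric) (b : OrthonormalBasis ι 𝕜 E) {μ : ι → ℝ}
    (hb : ∀ i, T (b i) = (μ i : 𝕜) • b i)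
    {w₁ w₂ : K → E} (h₁ : Orthonormal 𝕜 w₁) (h₂ : Orthonormal 𝕜 w₂) :
    ∃ x : ι → ℝ, (∀ i, |x i| ≤ 1) ∧ ∑ i, x i = 0 ∧
      ∑ k, (re ⟪w₁ k, T (w₁ k)⟫_𝕜 - re ⟪w₂ k, T (w₂ k)⟫_𝕜) = ∑ i, μ i * x i := by
  refine ⟨fun i => ∑ k, ‖⟪b i, w₁ k⟫_𝕜‖ ^ 2 - ∑ k, ‖⟪b i, w₂ k⟫_𝕜‖ ^ 2, fun i => ?_, ?_, ?_⟩
  · have h₁i := h₁.sum_sq_norm_inner_le_one b i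
    have h₂i := h₂.sum_sq_norm_inner_le_one b i
    have : 0 ≤ ∑ k, ‖⟪b i, w₁ k⟫_𝕜‖ ^ 2 := by positivity
    have : 0 ≤ ∑ k, ‖⟪b i, w₂ k⟫_𝕜‖ ^ 2 := by positivity
    rw [abs_le]
    constructor <;> linarith
  · rw [sum_sub_distrib, h₁.sum_sum_sq_norm_inner, h₂.sum_sum_sq_norm_inner, sub_self]
  · simp only [hT.re_inner_apply_self_eq_sum b hb, mul_sub, mul_sum, sum_sub_distrib]
    rw [sum_comm, sum_comm (s := univ) (t := univ) (f := fun k i => μ i * ‖⟪b i, w₂ k⟫_𝕜‖ ^ 2)]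

theorem Orthonormal.inv_sqrt_two_smul_add {x y : K → E} (hx : Orthonormal 𝕜 x)
    (hy : Orthonormal 𝕜 y) (hxy : ∀ j k, ⟪x j, y k⟫_𝕜 = 0) :
    Orthonormal 𝕜 fun k => (((√2)⁻¹ : ℝ) : 𝕜) • (x k + y k) := by
  classical
  have hyx : ∀ j k, ⟪y j, x k⟫_𝕜 = 0 := fun j k => by rw [← inner_conj_symm, hxy, map_zero]
  rw [orthonormal_iff_ite] at hx hy ⊢
  intro j k
  rw [inner_smul_left, inner_smul_right, conj_ofReal, ← mul_assoc, ← ofReal_mul,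
    inv_sqrt_two_mul_self, ofReal_inv, ofReal_ofNat, inner_add_left, inner_add_right,
    inner_add_right, hx, hy, hxy, hyx]
  split_ifs <;> norm_num

theorem Orthonormal.inv_sqrt_two_smul_sub {x y : K → E} (hx : Orthonormal 𝕜 x)
    (hy : Orthonormal 𝕜 y) (hxy : ∀ j k, ⟪x j, y k⟫_𝕜 = 0) :
    Orthonormal 𝕜 fun k => (((√2)⁻¹ : ℝ) : 𝕜) • (x k - y k) := by
  simpa only [sub_eq_add_neg, Pi.neg_apply] using hx.inv_sqrt_two_smul_add
    (hy.orthonormal_of_forall_eq_or_eq_neg (w := -y) fun _ => Or.inr rfl)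
    fun j k => by rw [Pi.neg_apply, inner_neg_right, hxy, neg_zero]

theorem LinearMap.IsSymmetric.re_inner_inv_sqrt_two_smul_add_sub {T : E →ₗ[𝕜] E}
    (hT : T.IsSymmetric) (x y : E) :
    re ⟪(((√2)⁻¹ : ℝ) : 𝕜) • (x + y), T ((((√2)⁻¹ : ℝ) : 𝕜) • (x + y))⟫_𝕜 -
      re ⟪(((√2)⁻¹ : ℝ) : 𝕜) • (x - y), T ((((√2)⁻¹ : ℝ) : 𝕜) • (x - y))⟫_𝕜 =
      2 * re ⟪x, T y⟫_𝕜 := by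
  have hyx : re ⟪y, T x⟫_𝕜 = re ⟪x, T y⟫_𝕜 := by rw [← hT, inner_re_symm]
  simp only [map_smul, inner_smul_left, inner_smul_right, conj_ofReal, re_ofReal_mul, map_add,
    map_sub, inner_add_left, inner_add_right, inner_sub_left, inner_sub_right]
  linear_combination (4 * re ⟪x, T y⟫_𝕜) * inv_sqrt_two_mul_self + (2 * (√2)⁻¹ * (√2)⁻¹) * hyx

theorem Orthonormal.exists_orthonormal_inner_apply_eq [FiniteDimensional 𝕜 E]
    [FiniteDimensional 𝕜 F] {v : K → E} (hv : Orthonormal 𝕜 v) {T : E →ₗ[𝕜] F} {σ : K → ℝ}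
    (hσ : ∀ k, σ k ≠ 0) (hTv : ∀ k, T.adjoint (T (v k)) = ((σ k ^ 2 : ℝ) : 𝕜) • v k) :
    ∃ u : K → F, Orthonormal 𝕜 u ∧ ∀ k, ⟪u k, T (v k)⟫_𝕜 = σ k := by
  classical
  have hgram : ∀ j k, ⟪T (v j), T (v k)⟫_𝕜 = ((σ k ^ 2 : ℝ) : 𝕜) * ⟪v j, v k⟫_𝕜 := fun j k => by
    rw [← LinearMap.adjoint_inner_right, hTv, inner_smul_right]
  refine ⟨fun k => ((σ k)⁻¹ : 𝕜) • T (v k), ?_, fun k => ?_⟩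
  · rw [orthonormal_iff_ite] at hv ⊢
    intro j k
    rw [inner_smul_left, inner_smul_right, hgram, hv]
    split_ifs with h
    · subst h
      have : (σ j : 𝕜) ≠ 0 := ofReal_ne_zero.2 (hσ j)
      simp only [map_inv₀, conj_ofReal, ofReal_pow]
      field_simp
    · simp
  · rw [inner_smul_left, hgram, inner_self_eq_norm_sq_to_K, hv.1 k]
    have : (σ k : 𝕜) ≠ 0 := ofReal_ne_zero.2 (hσ k)
    simp only [map_inv₀, conj_ofReal, ofReal_pow, ofReal_one, one_pow, mul_one]
    field_simp

end InnerProductSpace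

theorem IsSingList.exists_orthonormal_inner_eq {p q : ℕ} {Y : Matrix (Fin p) (Fin q) ℂ}
    {s : Fin q → ℝ} (hs : IsSingList Y s) :
    ∃ (u : {k // s k ≠ 0} → EuclideanSpace ℂ (Fin p))
      (v : {k // s k ≠ 0} → EuclideanSpace ℂ (Fin q)),
      Orthonormal ℂ u ∧ Orthonormal ℂ v ∧ ∀ k, ⟪u k, toEuclideanLin Y (v k)⟫_ℂ = s k := by
  obtain ⟨-, -, e, he⟩ := hs
  set f := (posSemidef_conjTranspose_mul_self Y).1.eigenvectorBasis
  have hv : Orthonormal ℂ fun k : {k // s k ≠ 0} => f (e k) :=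
    f.orthonormal.comp _ (e.injective.comp Subtype.val_injective)
  have hYv : ∀ k : {k // s k ≠ 0}, (toEuclideanLin Y).adjoint (toEuclideanLin Y (f (e k))) =
      ((s k ^ 2 : ℝ) : ℂ) • f (e k) := fun k => by
    rw [← toEuclideanLin_conjTranspose_eq_adjoint, ← LinearMap.comp_apply, ← toLpLin_mul_same,
      toLpLin_apply, (posSemidef_conjTranspose_mul_self Y).1.mulVec_eigenvectorBasis, he]
    rfl
  obtain ⟨u, hu, huv⟩ := hv.exists_orthonormal_inner_apply_eq (fun k => k.2) hYv
  exact ⟨u, _, hu, hv, huv⟩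

section Blocks

variable {𝕜 : Type*} [RCLike 𝕜] {p q : ℕ}

def finAddInl (q : ℕ) (u : EuclideanSpace 𝕜 (Fin p)) : EuclideanSpace 𝕜 (Fin (p + q)) :=
  toLp 2 (Fin.append (ofLp u) 0)

def finAddInr (p : ℕ) (v : EuclideanSpace 𝕜 (Fin q)) : EuclideanSpace 𝕜 (Fin (p + q)) :=
  toLp 2 (Fin.append 0 (ofLp v))

theorem inner_finAddInl_finAddInl (u u' : EuclideanSpace 𝕜 (Fin p)) :
    ⟪finAddInl q u, finAddInl q u'⟫_𝕜 = ⟪u, u'⟫_𝕜 := by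
  simp [finAddInl, EuclideanSpace.inner_eq_star_dotProduct, dotProduct, Fin.sum_univ_add]

theorem inner_finAddInr_finAddInr (v v' : EuclideanSpace 𝕜 (Fin q)) :
    ⟪finAddInr p v, finAddInr p v'⟫_𝕜 = ⟪v, v'⟫_𝕜 := by
  simp [finAddInr, EuclideanSpace.inner_eq_star_dotProduct, dotProduct, Fin.sum_univ_add]

theorem inner_finAddInl_finAddInr (u : EuclideanSpace 𝕜 (Fin p))
    (v : EuclideanSpace 𝕜 (Fin q)) : ⟪finAddInl q u, finAddInr p v⟫_𝕜 = 0 := by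
  simp [finAddInl, finAddInr, EuclideanSpace.inner_eq_star_dotProduct, dotProduct,
    Fin.sum_univ_add]

theorem inner_finAddInl_toEuclideanLin_finAddInr (X : Matrix (Fin (p + q)) (Fin (p + q)) ℂ)
    (u : EuclideanSpace ℂ (Fin p)) (v : EuclideanSpace ℂ (Fin q)) :
    ⟪finAddInl q u, toEuclideanLin X (finAddInr p v)⟫_ℂ =
      ⟪u, toEuclideanLin (offBlock X) v⟫_ℂ := by
  simp [finAddInl, finAddInr, EuclideanSpace.inner_eq_star_dotProduct, dotProduct, mulVec,
    Fin.sum_univ_add, offBlock, toLpLin_apply]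

theorem Orthonormal.finAddInl {K : Type*} {u : K → EuclideanSpace 𝕜 (Fin p)}
    (hu : Orthonormal 𝕜 u) : Orthonormal 𝕜 fun k => finAddInl q (u k) := by
  classical
  rw [orthonormal_iff_ite] at hu ⊢
  simpa only [inner_finAddInl_finAddInl] using hu

theorem Orthonormal.finAddInr {K : Type*} {v : K → EuclideanSpace 𝕜 (Fin q)}
    (hv : Orthonormal 𝕜 v) : Orthonormal 𝕜 fun k => finAddInr p (v k) := by
  classical
  rw [orthonormal_iff_ite] at hv ⊢
  simpa only [inner_finAddInr_finAddInr] using hv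

end Blocks

theorem Matrix.IsHermitian.exists_sum_eigenvalues_mul_eq_two_mul_sum {p q : ℕ}
    {X : Matrix (Fin (p + q)) (Fin (p + q)) ℂ} (hX : X.IsHermitian) {s : Fin q → ℝ}
    (hs : IsSingList (offBlock X) s) :
    ∃ x : Fin (p + q) → ℝ, (∀ i, |x i| ≤ 1) ∧ ∑ i, x i = 0 ∧
      ∑ i, hX.eigenvalues i * x i = 2 * ∑ k, s k := by
  classical
  obtain ⟨u, v, hu, hv, huv⟩ := hs.exists_orthonormal_inner_eq
  have hT : (toEuclideanLin X).IsSymmetric := isSymmetric_toEuclideanLin_iff.2 hX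
  have hb : ∀ i, toEuclideanLin X (hX.eigenvectorBasis i) =
      (hX.eigenvalues i : ℂ) • hX.eigenvectorBasis i := fun i => by
    rw [toLpLin_apply, hX.mulVec_eigenvectorBasis]
    rfl
  have hinl := hu.finAddInl (q := q)
  have hinr := hv.finAddInr (p := p)
  have horth : ∀ j k, ⟪finAddInl q (u j), finAddInr p (v k)⟫_ℂ = 0 := fun j k =>
    inner_finAddInl_finAddInr _ _
  obtain ⟨x, hx, hx₀, hxsum⟩ := hT.exists_sum_re_inner_sub_eq
    hX.eigenvectorBasis (μ := hX.eigenvalues) hb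
    (hinl.inv_sqrt_two_smul_add hinr horth) (hinl.inv_sqrt_two_smul_sub hinr horth)
  refine ⟨x, hx, hx₀, ?_⟩
  -- Singular pairs exist only for `s k ≠ 0`, but the vanishing `s k` do not contribute to the sum.
  rw [← hxsum, ← sum_filter_ne_zero (f := s),
    sum_subtype (univ.filter fun k => s k ≠ 0) (p := (s · ≠ 0)) (by simp), mul_sum]
  refine sum_congr rfl fun k _ => ?_
  rw [hT.re_inner_inv_sqrt_two_smul_add_sub, inner_finAddInl_toEuclideanLin_finAddInr, huv,
    re_to_complex, Complex.ofReal_re]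

/-- for a `6×6` Hermitian matrix,
`λ₁ + λ₂ + λ₃ − λ₄ − λ₅ − λ₆ ≥ 2(s₁ + s₂ + s₃)`. -/
theorem six_by_six_inequality (X : Matrix (Fin (3 + 3)) (Fin (3 + 3)) ℂ)
    (hX : X.IsHermitian)
    (lam : Fin (3 + 3) → ℝ) (hlam : IsEigList hX lam)
    (s : Fin 3 → ℝ) (hs : IsSingList (offBlock X) s) :
    lam 0 + lam 1 + lam 2 - lam 3 - lam 4 - lam 5 ≥ 2 * (s 0 + s 1 + s 2) := by
  obtain ⟨hanti, e, he⟩ := hlam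
  obtain ⟨x, hx, hx₀, hxsum⟩ := hX.exists_sum_eigenvalues_mul_eq_two_mul_sum hs
  calc 2 * (s 0 + s 1 + s 2) = ∑ i, lam i * x (e i) := by
        rw [← Fin.sum_univ_three, ← hxsum, ← e.sum_comp]
        simp only [he]
    _ ≤ _ := sum_mul_le_top_three_sub_bottom_three hanti (fun i => hx (e i))
        ((e.sum_comp x).trans hx₀)
end
end
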